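/- For g = 4: for every nonzero η ∈ 𝔽₂^4 × 𝔽₂^4, exactly 56 characteristics c ∈ 𝔽₂^4 × 𝔽₂^4 satisfy that both c and c + η are odd; equivalently, there are exactly 28 unordered pairs {c, c + η} of odd theta characteristics differing by η. (This is the combinatorial counterpart of Milne's bijection between pairs of tritangent planes of a genus 4 curve differing by η and the 28 bitangents of the associated plane quartic Prym curve.) -/

import Mathlib

/-- Theta characteristics for genus `g`, identified with pairs `(a, b) ∈ 𝔽₂^g × 𝔽₂^g`,
added componentwise. -/
abbrev ThetaChar (g : ℕ) := (Fin g → ZMod 2) × (Fin g → ZMod 2)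

/-- The parity form `q(c) = a · b = ∑ᵢ aᵢ bᵢ ∈ 𝔽₂`. -/
def qform {g : ℕ} (c : ThetaChar g) : ZMod 2 := ∑ i, c.1 i * c.2 i

/-- A characteristic is odd if `q(c) = 1`. -/
def IsOddChar {g : ℕ} (c : ThetaChar g) : Prop := qform c = 1

/-- A characteristic is even if `q(c) = 0`. -/
def IsEvenChar {g : ℕ} (c : ThetaChar g) : Prop := qform c = 0

/-- A triple `c₁, c₂, c₃` is azygetic if `q(c₁+c₂+c₃) + q(c₁) + q(c₂) + q(c₃) = 1`. -/
def AzyTriple {g : ℕ} (c₁ c₂ c₃ : ThetaChar g) : Prop :=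
  qform (c₁ + c₂ + c₃) + qform c₁ + qform c₂ + qform c₃ = 1

/-- An indexed system is azygetic if every triple of members with three distinct
indices is an azygetic triple. -/
def AzySystem {g n : ℕ} (c : Fin n → ThetaChar g) : Prop :=
  ∀ i j k : Fin n, i ≠ j → j ≠ k → i ≠ k → AzyTriple (c i) (c j) (c k)

/-- A system is essentially independent if every sum over a nonempty index subset of
even cardinality is nonzero. -/
def EssInd {g n : ℕ} (c : Fin n → ThetaChar g) : Prop :=
  ∀ s : Finset (Fin n), s.Nonempty → Even s.card → ∑ i ∈ s, c i ≠ 0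


/-! With `χ x = (-1) ^ x` on `𝔽₂`, the indicator of `q c = 1 ∧ q (c + η) = 1` is
`(1 - χ (q c)) (1 - χ (q (c + η))) / 4`. The Gauss sum `∑ χ (q c)` is `2 ^ g`, because
`∑_b χ (a ⬝ b)` vanishes unless `a = 0`. Since `q (c + η) = q c + q η + polar η c` with `polar η`
a nonzero linear form when `η ≠ 0`, the sum of `χ (q c) χ (q (c + η))` vanishes. Hence there are
`(4 ^ g - 2 ^ (g + 1)) / 4` such `c`, that is `56` for `g = 4`, and the fixed-point-free involution
`c ↦ c + η` groups them into `28` pairs. -/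

open Finset Matrix

variable {g : ℕ}

instance (c : ThetaChar g) : Decidable (IsOddChar c) := inferInstanceAs (Decidable (qform c = 1))

lemma qform_eq_dotProduct (c : ThetaChar g) : qform c = c.1 ⬝ᵥ c.2 := rfl

lemma thetaChar_add_self (c : ThetaChar g) : c + c = 0 := by
  ext i <;> exact CharTwo.add_self_eq_zero _

def polar (d : ThetaChar g) : ThetaChar g →+ ZMod 2 :=
  AddMonoidHom.mk' (fun c => c.1 ⬝ᵥ d.2 + d.1 ⬝ᵥ c.2) fun c c' => by
    simp only [Prod.fst_add, Prod.snd_add, add_dotProduct, dotProduct_add]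
    ring

lemma qform_add (c d : ThetaChar g) : qform (c + d) = qform c + qform d + polar d c := by
  simp only [qform, polar, AddMonoidHom.mk'_apply, dotProduct, ← Finset.sum_add_distrib]
  refine Finset.sum_congr rfl fun i _ => ?_
  simp only [Prod.fst_add, Prod.snd_add, Pi.add_apply]
  ring

lemma polar_ne_zero {d : ThetaChar g} (hd : d ≠ 0) : polar d ≠ 0 := by
  classical
  intro h
  have hpolar : ∀ c, polar d c = 0 := fun c => DFunLike.congr_fun h c
  apply hd
  ext i
  · simpa [polar] using hpolar (0, Pi.single i 1)
  · simpa [polar] using hpolar (Pi.single i 1, 0)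

def signChar : AddChar (ZMod 2) ℤ := AddChar.zmodChar 2 (by norm_num : (-1 : ℤ) ^ 2 = 1)

lemma four_mul_ite_eq_one_and_eq_one (x y : ZMod 2) :
    4 * (if x = 1 ∧ y = 1 then 1 else 0 : ℤ) = (1 - signChar x) * (1 - signChar y) := by
  fin_cases x <;> fin_cases y <;> decide

lemma sum_signChar_eq_zero {G : Type*} [AddCommGroup G] [Fintype G] {L : G →+ ZMod 2}
    (hL : L ≠ 0) : ∑ x, signChar (L x) = 0 := by
  refine AddChar.sum_eq_zero_of_ne_one (ψ := signChar.compAddMonoidHom L) ?_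
  obtain ⟨x, hx⟩ := DFunLike.ne_iff.1 hL
  have signChar_ne_one : ∀ y : ZMod 2, y ≠ 0 → signChar y ≠ 1 := by decide
  exact AddChar.ne_one_iff.2 ⟨x, signChar_ne_one _ hx⟩

lemma sum_signChar_dotProduct (a : Fin g → ZMod 2) :
    ∑ b, signChar (a ⬝ᵥ b) = if a = 0 then 2 ^ g else 0 := by
  split_ifs with ha
  · simp [ha]
  · classical
    obtain ⟨i, hi⟩ := Function.ne_iff.1 ha
    refine sum_signChar_eq_zero (L := AddMonoidHom.mk' (a ⬝ᵥ ·) (dotProduct_add a)) ?_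
    exact DFunLike.ne_iff.2 ⟨Pi.single i 1, by simpa using hi⟩

lemma sum_signChar_qform : ∑ c : ThetaChar g, signChar (qform c) = 2 ^ g := by
  simp [Fintype.sum_prod_type, qform_eq_dotProduct, sum_signChar_dotProduct]

lemma sum_signChar_qform_mul_qform_add {η : ThetaChar g} (hη : η ≠ 0) :
    ∑ c, signChar (qform c) * signChar (qform (c + η)) = 0 := by
  have hq : ∀ c, qform c + qform (c + η) = qform η + polar η c := fun c => by
    rw [qform_add]
    grind
  calc ∑ c, signChar (qform c) * signChar (qform (c + η))
      = ∑ c, signChar (qform η) * signChar (polar η c) :=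
        Finset.sum_congr rfl fun c _ => by rw [← AddChar.map_add_eq_mul, hq, AddChar.map_add_eq_mul]
    _ = 0 := by rw [← Finset.mul_sum, sum_signChar_eq_zero (polar_ne_zero hη), mul_zero]

theorem card_filter_isOddChar_and_isOddChar_add {η : ThetaChar g} (hη : η ≠ 0) :
    4 * #{c | IsOddChar c ∧ IsOddChar (c + η)} + 2 ^ (g + 1) = 4 ^ g := by
  have hcard : (Fintype.card (ThetaChar g) : ℤ) = 4 ^ g := by simp [← mul_pow]
  have hshift : ∑ c, signChar (qform (c + η)) = ∑ c, signChar (qform c) :=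
    Fintype.sum_equiv (Equiv.addRight η) _ _ fun _ => rfl
  have hcount : (4 * #{c | IsOddChar c ∧ IsOddChar (c + η)} : ℤ) =
      ∑ c, (1 - signChar (qform c)) * (1 - signChar (qform (c + η))) := by
    rw [Finset.card_filter, Nat.cast_sum, Finset.mul_sum]
    exact Finset.sum_congr rfl fun c _ => by
      push_cast
      exact four_mul_ite_eq_one_and_eq_one _ _
  have hexpand : ∀ a b : ℤ, (1 - a) * (1 - b) = 1 - a - b + a * b := fun a b => by ring
  simp only [hexpand, Finset.sum_add_distrib, Finset.sum_sub_distrib, Finset.sum_const,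
    nsmul_eq_mul, mul_one, Finset.card_univ, hshift, sum_signChar_qform,
    sum_signChar_qform_mul_qform_add hη] at hcount
  zify
  rw [hcount, hcard]
  ring

lemma card_image_pair_mul_two {α : Type*} [DecidableEq α] {s : Finset α} {f : α → α}
    (hf : Function.Involutive f) (hfix : ∀ x, f x ≠ x) (hs : ∀ x ∈ s, f x ∈ s) :
    #(s.image fun x => ({x, f x} : Finset α)) * 2 = #s := by
  rw [Finset.card_eq_sum_card_image (fun x => ({x, f x} : Finset α)) s, Finset.sum_const_nat]
  rintro _ hp
  obtain ⟨x, hx, rfl⟩ := Finset.mem_image.1 hp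
  have hfiber : {y ∈ s | ({y, f y} : Finset α) = {x, f x}} = {x, f x} := by
    ext y
    simp only [Finset.mem_filter, Finset.mem_insert, Finset.mem_singleton]
    constructor
    · rintro ⟨-, hy⟩
      simpa [hy] using Finset.mem_insert_self y {f y}
    · rintro (rfl | rfl)
      · exact ⟨hx, rfl⟩
      · exact ⟨hs x hx, by rw [hf x, Finset.pair_comm]⟩
  rw [hfiber, Finset.card_pair (hfix x).symm]

/-- For `g = 4` and every nonzero `η ∈ 𝔽₂^4 × 𝔽₂^4`, exactly `56` characteristics `c`
satisfy that both `c` and `c + η` are odd; equivalently, there are exactly `28`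
unordered pairs `{c, c + η}` of odd theta characteristics differing by `η`. -/
theorem card_odd_pairs_differing_by_eta (η : ThetaChar 4) (hη : η ≠ 0) :
    Set.ncard {c : ThetaChar 4 | IsOddChar c ∧ IsOddChar (c + η)} = 56 ∧
    Set.ncard {s : Finset (ThetaChar 4) |
        ∃ c : ThetaChar 4, IsOddChar c ∧ IsOddChar (c + η) ∧ s = {c, c + η}} = 28 := by
  set S : Finset (ThetaChar 4) := {c | IsOddChar c ∧ IsOddChar (c + η)}
  have hS : #S = 56 := by
    have : 4 * #S + 2 ^ (4 + 1) = 4 ^ 4 := card_filter_isOddChar_and_isOddChar_add hη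
    omega
  have hshift : Function.Involutive (· + η) := fun c =>
    show c + η + η = c by rw [add_assoc, thetaChar_add_self, add_zero]
  set P : Finset (Finset (ThetaChar 4)) := S.image fun c => {c, c + η}
  have hP : #P * 2 = #S :=
    card_image_pair_mul_two hshift (fun c => by simpa using hη)
      fun c hc => by simpa [S, hshift c] using And.symm (Finset.mem_filter.1 hc).2
  constructor
  · rw [← hS, ← Set.ncard_coe_finset]
    simp [S]
  · have hP28 : (P : Set (Finset (ThetaChar 4))).ncard = 28 := by
      rw [Set.ncard_coe_finset]
      omega
    convert hP28 using 2
    ext p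
    simp [P, S, eq_comm, and_assoc]
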